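/- arXiv:1907.04349 — 3 statements merged into one kernel-verified Lean document; each statement's English description precedes it below -/
import Mathlib

section
/- For any signature σ of the complete graph K_n, the spectral radius satisfies ρ(K_n, σ) ≥ √(n-1), with equality if and only if A_σ is a symmetric conference matrix of order n (a symmetric {0,±1}-matrix with zero diagonal, ±1 off-diagonal, satisfying A_σ² = (n-1)I). -/
/-!
Diagonalising `A = U D U⋆` gives `tr (A * A) = ∑ λᵢ²`, while `(A * A) i i = n - 1` because
every off-diagonal entry squares to `1`. So the `n` numbers `λᵢ²` average to `n - 1`, and their
maximum `ρ²` is at least `n - 1`, with equality exactly when all `λᵢ² = n - 1`, i.e. when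
`A * A = (n - 1) • 1`.
-/

open Finset Matrix Unitary

namespace Matrix.IsHermitian

variable {𝕜 n : Type*} [RCLike 𝕜] [Fintype n] [DecidableEq n] {A : Matrix n n 𝕜}

theorem mul_self_eq_conj_diagonal_sq (hA : A.IsHermitian) :
    A * A = conjStarAlgAut 𝕜 _ hA.eigenvectorUnitary
      (diagonal fun i ↦ ((hA.eigenvalues i ^ 2 : ℝ) : 𝕜)) := by
  conv_lhs => rw [hA.spectral_theorem, ← map_mul, diagonal_mul_diagonal]
  simp [sq]

theorem trace_mul_self_eq_sum_eigenvalues_sq (hA : A.IsHermitian) :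
    (A * A).trace = ∑ i, ((hA.eigenvalues i ^ 2 : ℝ) : 𝕜) := by
  rw [hA.mul_self_eq_conj_diagonal_sq, conjStarAlgAut_apply, trace_mul_cycle,
    coe_star_mul_self, one_mul, trace_diagonal]

theorem mul_self_eq_smul_one_iff (hA : A.IsHermitian) (c : ℝ) :
    A * A = c • (1 : Matrix n n 𝕜) ↔ ∀ i, hA.eigenvalues i ^ 2 = c := by
  have hc : c • (1 : Matrix n n 𝕜) =
      conjStarAlgAut 𝕜 _ hA.eigenvectorUnitary (diagonal fun _ ↦ (c : 𝕜)) := by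
    rw [← smul_one_eq_diagonal, ← RCLike.real_smul_eq_coe_smul, conjStarAlgAut_apply,
      mul_smul_comm, smul_mul_assoc, mul_one, mul_star_self_of_mem hA.eigenvectorUnitary.2]
  rw [hA.mul_self_eq_conj_diagonal_sq, hc, EmbeddingLike.apply_eq_iff_eq, diagonal_eq_diagonal_iff]
  simp only [RCLike.ofReal_inj]

end Matrix.IsHermitian

theorem Matrix.trace_mul_self_of_signed_complete {R n : Type*} [Ring R] [Fintype n]
    [DecidableEq n] {A : Matrix n n R} (hA : A.IsSymm) (hdiag : ∀ i, A i i = 0)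
    (hoff : ∀ i j, i ≠ j → A i j = 1 ∨ A i j = -1) :
    (A * A).trace = Fintype.card n * (Fintype.card n - 1) := by
  have hentry (i j : n) : A i j * A j i = 1 - (1 : Matrix n n R) i j := by
    by_cases h : i = j
    · subst h
      rw [hdiag, one_apply_eq, sub_self, zero_mul]
    · rw [hA.apply i j, one_apply_ne h]
      rcases hoff i j h with h1 | h1 <;> simp [h1]
  simp [trace, mul_apply, hentry, sum_sub_distrib, one_apply, mul_sub]

section

variable {ι : Type*} [Fintype ι] [Nonempty ι] {f : ι → ℝ} {c : ℝ}

theorem Real.sqrt_le_sup'_abs_of_sum_sq_eq (h : ∑ i, f i ^ 2 = Fintype.card ι * c) :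
    √c ≤ univ.sup' univ_nonempty (fun i ↦ |f i|) := by
  obtain ⟨i, -, hi⟩ : ∃ i ∈ univ, c ≤ f i ^ 2 :=
    exists_le_of_sum_le univ_nonempty (by simp [h])
  calc √c ≤ √(f i ^ 2) := Real.sqrt_le_sqrt hi
    _ = |f i| := Real.sqrt_sq_eq_abs _
    _ ≤ _ := le_sup' (fun i ↦ |f i|) (mem_univ i)

theorem Real.sup'_abs_eq_sqrt_iff_of_sum_sq_eq (h : ∑ i, f i ^ 2 = Fintype.card ι * c) :
    univ.sup' univ_nonempty (fun i ↦ |f i|) = √c ↔ ∀ i, f i ^ 2 = c := by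
  have hc : 0 ≤ c := by
    have : 0 ≤ (Fintype.card ι : ℝ) * c := h ▸ sum_nonneg fun i _ ↦ sq_nonneg (f i)
    exact nonneg_of_mul_nonneg_right this (by exact_mod_cast Fintype.card_pos)
  constructor
  · intro hsup i
    have hle (j : ι) (_ : j ∈ univ) : f j ^ 2 ≤ c := by
      rw [← Real.sqrt_le_sqrt_iff hc, Real.sqrt_sq_eq_abs, ← hsup]
      exact le_sup' (fun i ↦ |f i|) (mem_univ j)
    exact (sum_eq_sum_iff_of_le hle).1 (by simp [h]) i (mem_univ i)
  · intro hf
    simp_rw [← Real.sqrt_sq_eq_abs, hf]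
    exact sup'_const _ _

end

/-- For any signature σ of the complete graph K_n (adjacency matrix A with zero
diagonal and ±1 off-diagonal entries, symmetric), the spectral radius satisfies
ρ(K_n,σ) ≥ √(n-1), with equality if and only if A is a symmetric conference matrix of order
n, i.e. A² = (n-1)·I. -/
theorem stmt_8 {n : ℕ} [NeZero n]
    (A : Matrix (Fin n) (Fin n) ℝ) (hA : A.IsSymm)
    (hdiag : ∀ i, A i i = 0)
    (hoff : ∀ i j, i ≠ j → (A i j = 1 ∨ A i j = -1))
    (hH : A.IsHermitian)
    (ρ : ℝ) (hρ : ρ = Finset.univ.sup' Finset.univ_nonempty (fun i => |hH.eigenvalues i|)) :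
    Real.sqrt (n - 1) ≤ ρ ∧
      (ρ = Real.sqrt (n - 1) ↔ A * A = ((n : ℝ) - 1) • (1 : Matrix (Fin n) (Fin n) ℝ)) := by
  have hsum : ∑ i, hH.eigenvalues i ^ 2 = Fintype.card (Fin n) * ((n : ℝ) - 1) := by
    have htrace := hH.trace_mul_self_eq_sum_eigenvalues_sq
    rw [trace_mul_self_of_signed_complete hA hdiag hoff] at htrace
    simpa using htrace.symm
  subst hρ
  exact ⟨Real.sqrt_le_sup'_abs_of_sum_sq_eq hsum,
    (Real.sup'_abs_eq_sqrt_iff_of_sum_sq_eq hsum).trans (hH.mul_self_eq_smul_one_iff _).symm⟩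
end

section
/- Let G be a k-regular graph on N vertices with a signed adjacency matrix A_s satisfying A_s² = k·I_N. Define B as the block matrix [[A_s, I_N],[I_N, -A_s]]. Then B is a signed adjacency matrix of a (k+1)-regular graph on 2N vertices (two copies of G joined by a perfect matching) and B² = (k+1)·I_{2N}; hence its spectral radius is √(k+1), attaining Gregory's lower bound. -/
/-!
Since `A * A = k • 1`, the block matrix `B = [[A, 1], [1, -A]]` satisfies `B * B = (k + 1) • 1`:
the off-diagonal blocks `A - A` cancel and the diagonal blocks are `A * A + 1`. Every eigenvalue
`μ` of the symmetric matrix `B` therefore has `μ ^ 2 = k + 1`, so `|μ| = √(k + 1)`.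
-/

open Matrix Finset

namespace Matrix

variable {n R : Type*} [Fintype n] [DecidableEq n]

theorem fromBlocks_one_one_neg_mul_self [Ring R] (A : Matrix n n R) :
    fromBlocks A 1 1 (-A) * fromBlocks A 1 1 (-A) = fromBlocks (A * A + 1) 0 0 (A * A + 1) := by
  simp [fromBlocks_multiply, add_comm]

theorem fromBlocks_one_one_neg_mul_self_eq_smul_one [Ring R] {A : Matrix n n R} {c : R}
    (hA : A * A = c • 1) :
    fromBlocks A 1 1 (-A) * fromBlocks A 1 1 (-A) = (c + 1) • 1 := by
  rw [fromBlocks_one_one_neg_mul_self, hA, ← fromBlocks_one, fromBlocks_smul, add_smul, one_smul]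
  simp

omit [Fintype n] in
theorem fromBlocks_one_one_neg_apply_eq_zero_or_eq_one_or_eq_neg_one [Ring R] {A : Matrix n n R}
    (hA : ∀ i j, A i j = 0 ∨ A i j = 1 ∨ A i j = -1) (v w : n ⊕ n) :
    fromBlocks A 1 1 (-A) v w = 0 ∨ fromBlocks A 1 1 (-A) v w = 1 ∨
      fromBlocks A 1 1 (-A) v w = -1 := by
  rcases v with i | i <;> rcases w with j | j
  · exact hA i j
  · by_cases h : i = j <;> simp [h]
  · by_cases h : i = j <;> simp [h]
  · rcases hA i j with h | h | h <;> simp [h]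

theorem filter_fromBlocks_one_one_neg_inl_apply_ne_zero [Ring R] [Nontrivial R] [DecidableEq R]
    (A : Matrix n n R) (i : n) :
    ({w | fromBlocks A 1 1 (-A) (.inl i) w ≠ 0} : Finset (n ⊕ n)) =
      ({j | A i j ≠ 0} : Finset n).disjSum {i} := by
  ext (j | j) <;> simp [one_apply, eq_comm]

theorem filter_fromBlocks_one_one_neg_inr_apply_ne_zero [Ring R] [Nontrivial R] [DecidableEq R]
    (A : Matrix n n R) (i : n) :
    ({w | fromBlocks A 1 1 (-A) (.inr i) w ≠ 0} : Finset (n ⊕ n)) =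
      ({i} : Finset n).disjSum {j | A i j ≠ 0} := by
  ext (j | j) <;> simp [one_apply, eq_comm]

theorem card_filter_fromBlocks_one_one_neg_apply_ne_zero [Ring R] [Nontrivial R] [DecidableEq R]
    {A : Matrix n n R} {d : ℕ} (hA : ∀ i, #{j | A i j ≠ 0} = d) (v : n ⊕ n) :
    #{w | fromBlocks A 1 1 (-A) v w ≠ 0} = d + 1 := by
  rcases v with i | i
  · rw [filter_fromBlocks_one_one_neg_inl_apply_ne_zero, card_disjSum, hA, card_singleton]
  · rw [filter_fromBlocks_one_one_neg_inr_apply_ne_zero, card_disjSum, hA, card_singleton,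
      add_comm]

theorem IsHermitian.sq_eigenvalues_of_mul_self_eq_smul_one {𝕜 : Type*} [RCLike 𝕜]
    {A : Matrix n n 𝕜} (hA : A.IsHermitian) {c : ℝ} (hsq : A * A = (c : 𝕜) • 1) (i : n) :
    hA.eigenvalues i ^ 2 = c := by
  set v := ⇑(hA.eigenvectorBasis i)
  have hv : v ≠ 0 := fun h =>
    hA.eigenvectorBasis.orthonormal.ne_zero i (by ext j; exact congrFun h j)
  have hAv : A *ᵥ v = (hA.eigenvalues i : 𝕜) • v := by
    rw [hA.mulVec_eigenvectorBasis, RCLike.real_smul_eq_coe_smul (K := 𝕜)]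
  have hAAv : ((hA.eigenvalues i ^ 2 : ℝ) : 𝕜) • v = (c : 𝕜) • v :=
    calc ((hA.eigenvalues i ^ 2 : ℝ) : 𝕜) • v = A *ᵥ (A *ᵥ v) := by
          rw [hAv, mulVec_smul, hAv, smul_smul, RCLike.ofReal_pow, sq]
      _ = (c : 𝕜) • v := by rw [mulVec_mulVec, hsq, smul_mulVec, one_mulVec]
  exact_mod_cast smul_left_injective 𝕜 hv hAAv

theorem IsHermitian.abs_eigenvalues_of_mul_self_eq_smul_one {𝕜 : Type*} [RCLike 𝕜]
    {A : Matrix n n 𝕜} (hA : A.IsHermitian) {c : ℝ} (hsq : A * A = (c : 𝕜) • 1) (i : n) :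
    |hA.eigenvalues i| = √c := by
  rw [← hA.sq_eigenvalues_of_mul_self_eq_smul_one hsq i, Real.sqrt_sq_eq_abs]

end Matrix

namespace SimpleGraph

variable {V R : Type*} [Fintype V] [Zero R] [DecidableEq R] (G : SimpleGraph V) [DecidableRel G.Adj]

theorem filter_apply_ne_zero_eq_neighborFinset {A : Matrix V V R}
    (hadj : ∀ i j, G.Adj i j → A i j ≠ 0) (hnadj : ∀ i j, ¬ G.Adj i j → A i j = 0) (i : V) :
    ({j | A i j ≠ 0} : Finset V) = G.neighborFinset i := by
  ext j
  rw [mem_filter_univ, mem_neighborFinset]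
  exact ⟨not_imp_comm.mp (hnadj i j), hadj i j⟩

end SimpleGraph

theorem stmt_14_general {N k : ℕ} [NeZero N] (G : SimpleGraph (Fin N)) [DecidableRel G.Adj]
    (hreg : G.IsRegularOfDegree k)
    (As : Matrix (Fin N) (Fin N) ℝ)
    (hadj : ∀ i j, G.Adj i j → (As i j = 1 ∨ As i j = -1))
    (hnadj : ∀ i j, ¬ G.Adj i j → As i j = 0)
    (hsq : As * As = (k : ℝ) • (1 : Matrix (Fin N) (Fin N) ℝ))
    (B : Matrix (Fin N ⊕ Fin N) (Fin N ⊕ Fin N) ℝ)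
    (hB : B = Matrix.fromBlocks As 1 1 (-As))
    (hH : B.IsHermitian) :
    B.IsSymm ∧
    (∀ v w, B v w = 0 ∨ B v w = 1 ∨ B v w = -1) ∧
    (∀ v, (Finset.univ.filter (fun w => B v w ≠ 0)).card = k + 1) ∧
    B * B = ((k : ℝ) + 1) • (1 : Matrix (Fin N ⊕ Fin N) (Fin N ⊕ Fin N) ℝ) ∧
    Finset.univ.sup' Finset.univ_nonempty (fun i => |hH.eigenvalues i|)
      = Real.sqrt (k + 1) := by
  have hentries : ∀ i j, As i j = 0 ∨ As i j = 1 ∨ As i j = -1 := fun i j => by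
    by_cases h : G.Adj i j
    · exact .inr (hadj i j h)
    · exact .inl (hnadj i j h)
  have hrow : ∀ i, #{j | As i j ≠ 0} = k := fun i => by
    rw [G.filter_apply_ne_zero_eq_neighborFinset
      (fun i j h => by rcases hadj i j h with h | h <;> simp [h]) hnadj i]
    exact hreg i
  have hBsq : B * B = ((k : ℝ) + 1) • 1 := hB ▸ fromBlocks_one_one_neg_mul_self_eq_smul_one hsq
  have habs : ∀ v, |hH.eigenvalues v| = √(k + 1) :=
    hH.abs_eigenvalues_of_mul_self_eq_smul_one (by simpa using hBsq)
  subst hB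
  refine ⟨(conjTranspose_eq_transpose_of_trivial _).symm.trans hH,
    fromBlocks_one_one_neg_apply_eq_zero_or_eq_one_or_eq_neg_one hentries,
    card_filter_fromBlocks_one_one_neg_apply_ne_zero hrow, hBsq, ?_⟩
  simp only [habs]
  exact sup'_const _ _

/-- Let G be a k-regular graph on N vertices with a signed adjacency matrix
A_s satisfying A_s² = k·I.  Then B = [[A_s, I],[I, -A_s]] is a signed adjacency matrix of a
(k+1)-regular graph on 2N vertices (two copies of G joined by a perfect matching),
B² = (k+1)·I, and hence the spectral radius of B is √(k+1), attaining Gregory's bound. -/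
theorem stmt_14 {N k : ℕ} [NeZero N] (G : SimpleGraph (Fin N)) [DecidableRel G.Adj]
    (hreg : G.IsRegularOfDegree k)
    (As : Matrix (Fin N) (Fin N) ℝ) (hsymm : As.IsSymm)
    (hadj : ∀ i j, G.Adj i j → (As i j = 1 ∨ As i j = -1))
    (hnadj : ∀ i j, ¬ G.Adj i j → As i j = 0)
    (hsq : As * As = (k : ℝ) • (1 : Matrix (Fin N) (Fin N) ℝ))
    (B : Matrix (Fin N ⊕ Fin N) (Fin N ⊕ Fin N) ℝ)
    (hB : B = Matrix.fromBlocks As 1 1 (-As))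
    (hH : B.IsHermitian) :
    B.IsSymm ∧
    (∀ v w, B v w = 0 ∨ B v w = 1 ∨ B v w = -1) ∧
    (∀ v, (Finset.univ.filter (fun w => B v w ≠ 0)).card = k + 1) ∧
    B * B = ((k : ℝ) + 1) • (1 : Matrix (Fin N ⊕ Fin N) (Fin N ⊕ Fin N) ℝ) ∧
    Finset.univ.sup' Finset.univ_nonempty (fun i => |hH.eigenvalues i|)
      = Real.sqrt (k + 1) :=
  stmt_14_general G hreg As hadj hnadj hsq B hB hH
end

section
/- A connected signed graph Γ = (G,σ) is balanced (every cycle has positive sign) if and only if 0 is an eigenvalue of its Laplacian matrix L(Γ) = D(G) - A(Γ). -/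
/-!
If every cycle is positive then so is every closed walk, since `bypass` shortens a closed walk to
the trivial one by removing loops that are cycles or backtracked edges. Signs of walks from a base
vertex then define a switching `θ` with `σ(ij) = θ i θ j`, and `θ` is a kernel vector of `L(Γ)`.
Conversely `2 xᵀ L x = ∑_{i ~ j} (x i - σ(ij) x j)²`, so a kernel vector satisfies
`x i = σ(ij) x j` along edges; it is nowhere zero on the connected graph, so going around a closed
walk shows that its sign is `1`.
-/

open Finset Matrix

namespace SimpleGraph

variable {V : Type*} {G : SimpleGraph V} {s : Sym2 V → ℝ}

namespace Walk

def sign (s : Sym2 V → ℝ) {u v : V} (p : G.Walk u v) : ℝ := (p.edges.map s).prod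

@[simp]
lemma sign_nil {u : V} : (nil : G.Walk u u).sign s = 1 := rfl

@[simp]
lemma sign_cons {u v w : V} (h : G.Adj u v) (p : G.Walk v w) :
    (cons h p).sign s = s s(u, v) * p.sign s := by
  simp [sign]

@[simp]
lemma sign_append {u v w : V} (p : G.Walk u v) (q : G.Walk v w) :
    (p.append q).sign s = p.sign s * q.sign s := by
  simp [sign]

@[simp]
lemma sign_reverse {u v : V} (p : G.Walk u v) : p.reverse.sign s = p.sign s := by
  simp [sign, List.prod_reverse]

section Signature

variable (hs : ∀ e ∈ G.edgeSet, s e = 1 ∨ s e = -1)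
include hs

lemma sign_eq_one_or_eq_neg_one {u v : V} (p : G.Walk u v) : p.sign s = 1 ∨ p.sign s = -1 := by
  induction p with
  | nil => simp
  | cons h p ih =>
    rcases hs _ (G.mem_edgeSet.mpr h) with h1 | h1 <;> rcases ih with h2 | h2 <;> simp [h1, h2]

lemma sign_mul_self {u v : V} (p : G.Walk u v) : p.sign s * p.sign s = 1 := by
  rcases sign_eq_one_or_eq_neg_one hs p with h | h <;> simp [h]

variable (hcyc : ∀ (u : V) (c : G.Walk u u), c.IsCycle → c.sign s = 1)
include hcyc

/-- Closing a path by an edge gives a cycle, unless the path is that edge traversed backwards. -/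
lemma sign_cons_eq_one_of_isPath {u v : V} (h : G.Adj u v) {p : G.Walk v u} (hp : p.IsPath) :
    (cons h p).sign s = 1 := by
  by_cases he : s(u, v) ∈ p.edges
  · cases p with
    | nil => exact (h.ne rfl).elim
    | cons h' q =>
      rw [cons_isPath_iff] at hp
      rcases List.mem_cons.mp he with he | he
      · obtain ⟨rfl, -⟩ | ⟨rfl, -⟩ := Sym2.eq_iff.mp he
        · exact (h.ne rfl).elim
        · obtain rfl := (isPath_iff_nil.mp hp.1).eq_nil
          simpa [Sym2.eq_swap] using sign_mul_self hs (cons h nil)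
      · exact absurd (q.snd_mem_support_of_mem_edges he) hp.2
  · exact hcyc u _ ((cons_isCycle_iff p h).mpr ⟨hp, he⟩)

lemma sign_bypass [DecidableEq V] {u v : V} (p : G.Walk u v) : p.bypass.sign s = p.sign s := by
  induction p with
  | nil => rfl
  | @cons u v w h p ih =>
    simp only [bypass]
    split_ifs with hu
    · have hsplit := congrArg (sign s) (p.bypass.take_spec hu)
      rw [sign_append] at hsplit
      have hloop := sign_cons_eq_one_of_isPath hs hcyc h (p.bypass_isPath.takeUntil hu)
      rw [sign_cons] at hloop ⊢
      rw [← ih, ← hsplit, ← mul_assoc, hloop, one_mul]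
    · rw [sign_cons, sign_cons, ih]

lemma sign_eq_one_of_forall_isCycle {u : V} (c : G.Walk u u) : c.sign s = 1 := by
  classical
  rw [← sign_bypass hs hcyc, (isPath_iff_nil.mp c.bypass_isPath).eq_nil, sign_nil]

end Signature

lemma eq_sign_mul_of_forall_adj_eq_mul {x : V → ℝ} (hx : ∀ i j, G.Adj i j → x i = s s(i, j) * x j)
    {u v : V} (p : G.Walk u v) : x u = p.sign s * x v := by
  induction p with
  | nil => simp
  | cons h p ih => rw [sign_cons, mul_assoc, ← ih, hx _ _ h]

end Walk

theorem Connected.exists_switching_of_forall_sign_eq_one (hconn : G.Connected)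
    (hs : ∀ e ∈ G.edgeSet, s e = 1 ∨ s e = -1)
    (hclosed : ∀ (u : V) (c : G.Walk u u), c.sign s = 1) :
    ∃ θ : V → ℝ, (∀ u, θ u = 1 ∨ θ u = -1) ∧ ∀ i j, G.Adj i j → s s(i, j) = θ i * θ j := by
  obtain ⟨v₀⟩ := hconn.nonempty
  let P (u : V) : G.Walk v₀ u := (hconn.preconnected v₀ u).some
  refine ⟨fun u => (P u).sign s, fun u => Walk.sign_eq_one_or_eq_neg_one hs (P u), ?_⟩
  intro i j hij
  have hloop := hclosed v₀ ((P i).append (.cons hij (P j).reverse))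
  simp only [Walk.sign_append, Walk.sign_cons, Walk.sign_reverse] at hloop
  linear_combination (P i).sign s * (P j).sign s * hloop
    - s s(i, j) * (P j).sign s ^ 2 * Walk.sign_mul_self hs (P i)
    - s s(i, j) * Walk.sign_mul_self hs (P j)

lemma Connected.sign_eq_one_of_forall_adj_eq_mul (hconn : G.Connected) {x : V → ℝ} (hx0 : x ≠ 0)
    (hx : ∀ i j, G.Adj i j → x i = s s(i, j) * x j) {u : V} (c : G.Walk u u) : c.sign s = 1 := by
  have hu : x u ≠ 0 := by
    contrapose! hx0
    funext v
    obtain ⟨p⟩ := hconn.preconnected v u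
    simp [Walk.eq_sign_mul_of_forall_adj_eq_mul hx p, hx0]
  exact mul_right_cancel₀ hu (by rw [one_mul, ← Walk.eq_sign_mul_of_forall_adj_eq_mul hx c])

variable [Fintype V] [DecidableRel G.Adj]

variable (G s) in
def signedAdjMatrix : Matrix V V ℝ := of fun i j => if G.Adj i j then s s(i, j) else 0

variable (G s) in
def signedLapMatrix [DecidableEq V] : Matrix V V ℝ :=
  diagonal (fun i => (G.degree i : ℝ)) - signedAdjMatrix G s

variable [DecidableEq V]

lemma signedLapMatrix_mulVec_apply (x : V → ℝ) (i : V) :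
    (signedLapMatrix G s *ᵥ x) i = ∑ j, if G.Adj i j then x i - s s(i, j) * x j else 0 := by
  rw [signedLapMatrix, sub_mulVec, Pi.sub_apply, mulVec_diagonal, degree_eq_sum_if_adj, sum_mul]
  simp only [mulVec, dotProduct, signedAdjMatrix, of_apply, ← sum_sub_distrib]
  refine sum_congr rfl fun j _ => ?_
  split_ifs <;> ring

lemma sum_sum_sq_eq_two_mul_dotProduct_signedLapMatrix_mulVec
    (hs : ∀ e ∈ G.edgeSet, s e = 1 ∨ s e = -1) (x : V → ℝ) :
    ∑ i, ∑ j, (if G.Adj i j then (x i - s s(i, j) * x j) ^ 2 else 0) =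
      2 * (x ⬝ᵥ (signedLapMatrix G s *ᵥ x)) := by
  -- `(x i - σ x j)² = x i (x i - σ x j) + x j (x j - σ x i)` for `σ = s(i, j) = ±1`
  set f : V → V → ℝ := fun i j => if G.Adj i j then x i * (x i - s s(i, j) * x j) else 0
  have hsplit : ∀ i j, (if G.Adj i j then (x i - s s(i, j) * x j) ^ 2 else 0) = f i j + f j i := by
    intro i j
    by_cases hij : G.Adj i j
    · simp only [f, if_pos hij, if_pos hij.symm, Sym2.eq_swap (a := j)]
      rcases hs _ (G.mem_edgeSet.mpr hij) with h | h <;> rw [h] <;> ring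
    · have hji : ¬G.Adj j i := fun h => hij h.symm
      simp [f, hij, hji]
  have hf : ∑ i, ∑ j, f i j = x ⬝ᵥ (signedLapMatrix G s *ᵥ x) := by
    simp only [dotProduct, signedLapMatrix_mulVec_apply, mul_sum, mul_ite, mul_zero, f]
  simp only [hsplit, sum_add_distrib]
  rw [sum_comm (f := fun i j => f j i), hf, two_mul]

lemma forall_adj_eq_mul_of_signedLapMatrix_mulVec_eq_zero
    (hs : ∀ e ∈ G.edgeSet, s e = 1 ∨ s e = -1) {x : V → ℝ} (hx : signedLapMatrix G s *ᵥ x = 0) :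
    ∀ i j, G.Adj i j → x i = s s(i, j) * x j := by
  have henergy := sum_sum_sq_eq_two_mul_dotProduct_signedLapMatrix_mulVec hs x
  rw [hx, dotProduct_zero, mul_zero] at henergy
  have hnonneg : ∀ i j, 0 ≤ (if G.Adj i j then (x i - s s(i, j) * x j) ^ 2 else 0) := by
    intro i j
    split_ifs <;> positivity
  intro i j hij
  have hi := (Fintype.sum_eq_zero_iff_of_nonneg fun i => sum_nonneg fun j _ => hnonneg i j).mp
    henergy
  have hij' := (Fintype.sum_eq_zero_iff_of_nonneg (hnonneg i)).mp (congrFun hi i)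
  simpa [hij, sub_eq_zero] using congrFun hij' j

lemma signedLapMatrix_mulVec_eq_zero_of_switching {θ : V → ℝ} (hθ : ∀ u, θ u = 1 ∨ θ u = -1)
    (hswitch : ∀ i j, G.Adj i j → s s(i, j) = θ i * θ j) : signedLapMatrix G s *ᵥ θ = 0 := by
  funext i
  rw [signedLapMatrix_mulVec_apply, Pi.zero_apply]
  refine sum_eq_zero fun j _ => ?_
  split_ifs with hij
  · rw [hswitch i j hij]
    rcases hθ j with h | h <;> rw [h] <;> ring
  · rfl

end SimpleGraph

open SimpleGraph

/-- Zaslavsky: A connected signed graph Γ = (G,σ) is balanced (every cycle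
has positive sign, the sign of a cycle being the product of its edge signs) if and only if
0 is an eigenvalue of its Laplacian matrix L(Γ) = D(G) - A(Γ). -/
theorem stmt_15 {n : ℕ} (G : SimpleGraph (Fin n)) [DecidableRel G.Adj]
    (hconn : G.Connected)
    (s : Sym2 (Fin n) → ℝ)
    (hsign : ∀ e ∈ G.edgeSet, s e = 1 ∨ s e = -1)
    (A : Matrix (Fin n) (Fin n) ℝ)
    (hA : ∀ i j, A i j = if G.Adj i j then s s(i, j) else 0)
    (L : Matrix (Fin n) (Fin n) ℝ)
    (hL : L = Matrix.diagonal (fun i => (G.degree i : ℝ)) - A) :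
    (∀ (u : Fin n) (w : G.Walk u u), w.IsCycle → (w.edges.map s).prod = 1) ↔
      ∃ x : Fin n → ℝ, x ≠ 0 ∧ L.mulVec x = 0 := by
  obtain rfl : A = signedAdjMatrix G s := Matrix.ext hA
  obtain rfl : L = signedLapMatrix G s := hL
  constructor
  · intro hcyc
    obtain ⟨θ, hθ, hswitch⟩ := hconn.exists_switching_of_forall_sign_eq_one hsign
      fun _ => Walk.sign_eq_one_of_forall_isCycle hsign hcyc
    obtain ⟨v⟩ := hconn.nonempty
    refine ⟨θ, fun h => ?_, signedLapMatrix_mulVec_eq_zero_of_switching hθ hswitch⟩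
    rcases hθ v with hv | hv <;> simp [h] at hv
  · rintro ⟨x, hx0, hLx⟩ u w -
    exact hconn.sign_eq_one_of_forall_adj_eq_mul hx0
      (forall_adj_eq_mul_of_signedLapMatrix_mulVec_eq_zero hsign hLx) w
end
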